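/- arXiv:1907.12963 — 2 statements merged into one kernel-verified Lean document; each statement's English description precedes it below -/
import Mathlib

section
/- For all integers p, q ≥ 2, the energy of the line graph of the complete bipartite graph K_{p,q} equals the energy of the complement of the line graph of K_{p,q}; that is, E(L(K_{p,q})) = E(complement of L(K_{p,q})). -/
open Polynomial

/-- Adjacency matrix over ℝ, using classical instances. -/
noncomputable def adjMat {V : Type*} [Finite V] (G : SimpleGraph V) : Matrix V V ℝ :=
  letI := Fintype.ofFinite V
  letI := Classical.decEq V
  letI := Classical.decRel G.Adj
  G.adjMatrix ℝ

/-- The energy of a graph: the sum of the absolute values of the eigenvalues of its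
adjacency matrix (equivalently, of the roots of its characteristic polynomial, with
multiplicity, which all are real since the matrix is real symmetric). -/
noncomputable def energy {V : Type*} [Finite V] (G : SimpleGraph V) : ℝ :=
  letI := Fintype.ofFinite V
  letI := Classical.decEq V
  (((adjMat G).charpoly).roots.map (fun x => |x|)).sum

/-!
The line graph of `K_{p,q}` is the rook's graph `K_p □ K_q`, with adjacency matrix
`A ⊗ 1 + 1 ⊗ B` where `A`, `B` are the adjacency matrices of `K_p`, `K_q`; its complement is
the tensor product `K_p × K_q`, with adjacency matrix `A ⊗ B`. One (non-orthogonal) eigenbasis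
diagonalizes `A`, with eigenvalues `a_i ∈ {p - 1, -1, …, -1}`, and likewise `B`, so the two
energies are `∑ |a_i + b_j|` and `∑ |a_i b_j|`. For `p, q ≥ 2` both equal `4 (p - 1) (q - 1)`.
-/

open Matrix SimpleGraph
open scoped Kronecker

theorem roots_charpoly_diagonal {n R : Type*} [Fintype n] [DecidableEq n] [CommRing R]
    [IsDomain R] (d : n → R) :
    (diagonal d).charpoly.roots = Finset.univ.val.map d := by
  rw [charpoly_diagonal]
  have h := roots_multiset_prod_X_sub_C (Finset.univ.val.map d)
  rwa [Multiset.map_map, ← Finset.prod_eq_multiset_prod] at h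

def SimpleGraph.Iso.compl {V W : Type*} {G : SimpleGraph V} {H : SimpleGraph W} (e : G ≃g H) :
    Gᶜ ≃g Hᶜ :=
  ⟨e.toEquiv, by simp [e.injective.eq_iff, e.map_adj_iff]⟩

section Energy

variable {V W : Type*}

theorem energy_eq_sum_abs_roots_charpoly [Fintype V] [DecidableEq V] (G : SimpleGraph V)
    [DecidableRel G.Adj] : energy G = ((G.adjMatrix ℝ).charpoly.roots.map (|·|)).sum := by
  unfold energy adjMat
  congr!

theorem energy_eq_sum_abs_of_mul_eq_mul_diagonal [Fintype V] [DecidableEq V]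
    (G : SimpleGraph V) [DecidableRel G.Adj] {S U : Matrix V V ℝ} {d : V → ℝ} (hSU : S * U = 1)
    (hS : G.adjMatrix ℝ * S = S * diagonal d) : energy G = ∑ v, |d v| := by
  have hA : G.adjMatrix ℝ = S * (diagonal d * U) := by
    rw [← Matrix.mul_assoc, ← hS, Matrix.mul_assoc, hSU, Matrix.mul_one]
  rw [energy_eq_sum_abs_roots_charpoly, hA, charpoly_mul_comm, Matrix.mul_assoc,
    mul_eq_one_comm.mp hSU, Matrix.mul_one, roots_charpoly_diagonal, Multiset.map_map]
  rfl

theorem energy_congr [Finite V] [Finite W] {G : SimpleGraph V} {H : SimpleGraph W}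
    (e : G ≃g H) : energy G = energy H := by
  classical
  cases nonempty_fintype V
  cases nonempty_fintype W
  rw [energy_eq_sum_abs_roots_charpoly, energy_eq_sum_abs_roots_charpoly,
    ← e.reindex_adjMatrix ℝ, charpoly_reindex]

end Energy

section CompleteGraph

variable {ι K : Type*} [Fintype ι] [DecidableEq ι] [Field K] (i₀ : ι)

/-- Its columns are the all-ones vector (at `i₀`) and the vectors `e j - e i₀` (at `j ≠ i₀`). -/
def completeGraphEigenbasis : Matrix ι ι K :=
  of fun i j => if j = i₀ then 1 else (if i = j then 1 else 0) - (if i = i₀ then 1 else 0)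

def completeGraphEigenbasisInv : Matrix ι ι K :=
  of fun i j => if i = i₀ then (Fintype.card ι : K)⁻¹
    else (if i = j then 1 else 0) - (Fintype.card ι : K)⁻¹

def completeGraphEigenvalue : ι → K :=
  fun i => if i = i₀ then (Fintype.card ι : K) - 1 else -1

theorem sum_completeGraphEigenbasis_apply (j : ι) :
    ∑ i, completeGraphEigenbasis (K := K) i₀ i j
      = if j = i₀ then (Fintype.card ι : K) else 0 := by
  by_cases hj : j = i₀
  · simp [completeGraphEigenbasis, hj]
  · simp [completeGraphEigenbasis, hj, Finset.sum_sub_distrib]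

theorem completeGraphEigenbasis_mul_inv [CharZero K] :
    completeGraphEigenbasis (K := K) i₀ * completeGraphEigenbasisInv i₀ = 1 := by
  rw [mul_eq_one_comm]
  have hn : (Fintype.card ι : K) ≠ 0 :=
    Nat.cast_ne_zero.mpr (Fintype.card_pos_iff.mpr ⟨i₀⟩).ne'
  ext i j
  by_cases hi : i = i₀
  · simp [mul_apply, completeGraphEigenbasisInv, hi, ← Finset.mul_sum,
      sum_completeGraphEigenbasis_apply, one_apply, hn, eq_comm]
  · simp only [mul_apply, completeGraphEigenbasisInv, of_apply, if_neg hi, sub_mul,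
      Finset.sum_sub_distrib, ← Finset.mul_sum, sum_completeGraphEigenbasis_apply, ite_mul,
      one_mul, zero_mul, Finset.sum_ite_eq, Finset.mem_univ, if_true, one_apply]
    by_cases hj : j = i₀
    · simp [completeGraphEigenbasis, hj, hi, hn]
    · simp [completeGraphEigenbasis, hj, hi]

theorem adjMatrix_completeGraph_mul_completeGraphEigenbasis :
    (completeGraph ι).adjMatrix K * completeGraphEigenbasis i₀
      = completeGraphEigenbasis i₀ * diagonal (completeGraphEigenvalue i₀) := by
  ext i j
  rw [adjMatrix_mul_apply, neighborFinset_top, eq_sub_of_add_eq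
      (Finset.sum_compl_add_sum {i} fun u => completeGraphEigenbasis (K := K) i₀ u j),
    Finset.sum_singleton, sum_completeGraphEigenbasis_apply, mul_diagonal]
  by_cases hj : j = i₀
  · simp [completeGraphEigenbasis, completeGraphEigenvalue, hj]
  · simp [completeGraphEigenbasis, completeGraphEigenvalue, hj]

theorem sum_completeGraphEigenvalue_apply (f : K → K) :
    ∑ i, f (completeGraphEigenvalue i₀ i)
      = f ((Fintype.card ι : K) - 1) + ((Fintype.card ι : K) - 1) * f (-1) := by
  have h : ∀ i, f (completeGraphEigenvalue i₀ i)
      = f (-1) + if i = i₀ then f ((Fintype.card ι : K) - 1) - f (-1) else 0 := by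
    intro i
    by_cases hi : i = i₀ <;> simp [completeGraphEigenvalue, hi]
  simp only [h, Finset.sum_add_distrib, Finset.sum_ite_eq', Finset.mem_univ, if_true,
    Finset.sum_const, Finset.card_univ, nsmul_eq_mul]
  ring

end CompleteGraph

section Kronecker

variable {m n R : Type*} [Fintype m] [Fintype n] [DecidableEq m] [DecidableEq n] [CommRing R]
  {A S U : Matrix m m R} {B S' U' : Matrix n n R} {a : m → R} {b : n → R}

theorem kronecker_mul_kronecker_eq_one (hSU : S * U = 1) (hSU' : S' * U' = 1) :
    (S ⊗ₖ S') * (U ⊗ₖ U') = 1 := by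
  rw [← mul_kronecker_mul, hSU, hSU', one_kronecker_one]

theorem kronecker_mul_kronecker_eq_mul_diagonal (hA : A * S = S * diagonal a)
    (hB : B * S' = S' * diagonal b) :
    (A ⊗ₖ B) * (S ⊗ₖ S') = (S ⊗ₖ S') * diagonal fun x => a x.1 * b x.2 := by
  rw [← mul_kronecker_mul, hA, hB, mul_kronecker_mul, diagonal_kronecker_diagonal]

theorem kroneckerSum_mul_kronecker_eq_mul_diagonal (hA : A * S = S * diagonal a)
    (hB : B * S' = S' * diagonal b) :
    (A ⊗ₖ 1 + 1 ⊗ₖ B) * (S ⊗ₖ S') = (S ⊗ₖ S') * diagonal fun x => a x.1 + b x.2 := by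
  have hA' : (A ⊗ₖ 1) * (S ⊗ₖ S') = (S ⊗ₖ S') * (diagonal a ⊗ₖ 1) := by
    rw [← mul_kronecker_mul, ← mul_kronecker_mul, hA, Matrix.one_mul, Matrix.mul_one]
  have hB' : (1 ⊗ₖ B) * (S ⊗ₖ S') = (S ⊗ₖ S') * (1 ⊗ₖ diagonal b) := by
    rw [← mul_kronecker_mul, ← mul_kronecker_mul, hB, Matrix.one_mul, Matrix.mul_one]
  rw [Matrix.add_mul, hA', hB', ← Matrix.mul_add, ← diagonal_one, ← diagonal_one,
    diagonal_kronecker_diagonal, diagonal_kronecker_diagonal, diagonal_add]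
  simp only [mul_one, one_mul]

end Kronecker

section BoxProd

variable {α β R : Type*} [DecidableEq α] [DecidableEq β] [NonAssocSemiring R]

theorem adjMatrix_boxProd (G : SimpleGraph α) (H : SimpleGraph β) [DecidableRel G.Adj]
    [DecidableRel H.Adj] [DecidableRel (G □ H).Adj] :
    (G □ H).adjMatrix R = G.adjMatrix R ⊗ₖ 1 + 1 ⊗ₖ H.adjMatrix R := by
  ext ⟨a, b⟩ ⟨c, d⟩
  by_cases hac : a = c <;> by_cases hbd : b = d <;> simp [one_apply, hac, hbd]

theorem adjMatrix_compl_boxProd_completeGraph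
    [DecidableRel (completeGraph α □ completeGraph β).Adj] :
    (completeGraph α □ completeGraph β)ᶜ.adjMatrix R
      = (completeGraph α).adjMatrix R ⊗ₖ (completeGraph β).adjMatrix R := by
  ext ⟨a, b⟩ ⟨c, d⟩
  by_cases hac : a = c <;> by_cases hbd : b = d <;> simp [hac, hbd]

end BoxProd

section CompleteBipartiteLineGraph

variable {α β : Type*}

noncomputable def completeBipartiteGraphEdgeEquiv : α × β ≃ (completeBipartiteGraph α β).edgeSet :=
  (Equiv.ofInjective (fun x : α × β ↦ s(.inl x.1, .inr x.2)) fun x y h ↦ by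
      simpa [Prod.ext_iff] using h).trans
    (Equiv.setCongr edgeSet_completeBipartiteGraph.symm)

theorem coe_completeBipartiteGraphEdgeEquiv (x : α × β) :
    (completeBipartiteGraphEdgeEquiv x : Sym2 (α ⊕ β)) = s(.inl x.1, .inr x.2) := rfl

noncomputable def completeGraphBoxProdIsoLineGraph :
    (completeGraph α □ completeGraph β) ≃g (completeBipartiteGraph α β).lineGraph where
  toEquiv := completeBipartiteGraphEdgeEquiv
  map_rel_iff' {x y} := by
    simp only [lineGraph_adj_iff_exists, coe_completeBipartiteGraphEdgeEquiv,
      completeBipartiteGraphEdgeEquiv.injective.ne_iff, Sym2.mem_iff, Sum.exists, Sum.inl.injEq,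
      Sum.inr.injEq, reduceCtorEq, or_false, false_or, exists_eq_left, boxProd_adj, top_adj, ne_eq,
      Prod.ext_iff]
    tauto

variable [Fintype α] [Fintype β]

theorem energy_boxProd_completeGraph (hα : 2 ≤ Fintype.card α) (hβ : 2 ≤ Fintype.card β) :
    energy (completeGraph α □ completeGraph β)
      = 4 * ((Fintype.card α : ℝ) - 1) * ((Fintype.card β : ℝ) - 1) := by
  classical
  obtain ⟨a₀⟩ : Nonempty α := Fintype.card_pos_iff.mp (by omega)
  obtain ⟨b₀⟩ : Nonempty β := Fintype.card_pos_iff.mp (by omega)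
  have hdiag := kroneckerSum_mul_kronecker_eq_mul_diagonal
    (adjMatrix_completeGraph_mul_completeGraphEigenbasis (K := ℝ) a₀)
    (adjMatrix_completeGraph_mul_completeGraphEigenbasis (K := ℝ) b₀)
  rw [← adjMatrix_boxProd] at hdiag
  rw [energy_eq_sum_abs_of_mul_eq_mul_diagonal _ (kronecker_mul_kronecker_eq_one
      (completeGraphEigenbasis_mul_inv a₀) (completeGraphEigenbasis_mul_inv b₀)) hdiag,
    Fintype.sum_prod_type]
  have hp : (2 : ℝ) ≤ Fintype.card α := by exact_mod_cast hα
  have hq : (2 : ℝ) ≤ Fintype.card β := by exact_mod_cast hβ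
  set p : ℝ := (Fintype.card α : ℝ)
  set q : ℝ := (Fintype.card β : ℝ)
  have hrow (s : ℝ) :
      ∑ j, |s + completeGraphEigenvalue b₀ j| = |s + (q - 1)| + (q - 1) * |s + -1| :=
    sum_completeGraphEigenvalue_apply b₀ (fun t => |s + t|)
  simp only [hrow]
  rw [sum_completeGraphEigenvalue_apply a₀ (fun s => |s + (q - 1)| + (q - 1) * |s + -1|),
    abs_of_nonneg (by linarith), abs_of_nonneg (by linarith), abs_of_nonneg (by linarith),
    abs_of_nonpos (by linarith)]
  ring

theorem energy_compl_boxProd_completeGraph [Nonempty α] [Nonempty β] :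
    energy (completeGraph α □ completeGraph β)ᶜ
      = 4 * ((Fintype.card α : ℝ) - 1) * ((Fintype.card β : ℝ) - 1) := by
  classical
  obtain ⟨a₀⟩ := ‹Nonempty α›
  obtain ⟨b₀⟩ := ‹Nonempty β›
  have hdiag := kronecker_mul_kronecker_eq_mul_diagonal
    (adjMatrix_completeGraph_mul_completeGraphEigenbasis (K := ℝ) a₀)
    (adjMatrix_completeGraph_mul_completeGraphEigenbasis (K := ℝ) b₀)
  rw [← adjMatrix_compl_boxProd_completeGraph] at hdiag
  rw [energy_eq_sum_abs_of_mul_eq_mul_diagonal _ (kronecker_mul_kronecker_eq_one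
      (completeGraphEigenbasis_mul_inv a₀) (completeGraphEigenbasis_mul_inv b₀)) hdiag,
    Fintype.sum_prod_type]
  simp only [abs_mul, ← Finset.mul_sum, ← Finset.sum_mul]
  rw [sum_completeGraphEigenvalue_apply a₀ (|·|), sum_completeGraphEigenvalue_apply b₀ (|·|)]
  have hp : (1 : ℝ) ≤ Fintype.card α := by exact_mod_cast Fintype.card_pos
  have hq : (1 : ℝ) ≤ Fintype.card β := by exact_mod_cast Fintype.card_pos
  rw [abs_neg, abs_one, abs_of_nonneg (sub_nonneg.mpr hp), abs_of_nonneg (sub_nonneg.mpr hq)]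
  ring

theorem energy_lineGraph_completeBipartiteGraph (hα : 2 ≤ Fintype.card α)
    (hβ : 2 ≤ Fintype.card β) :
    energy (completeBipartiteGraph α β).lineGraph
      = 4 * ((Fintype.card α : ℝ) - 1) * ((Fintype.card β : ℝ) - 1) := by
  rw [← energy_congr completeGraphBoxProdIsoLineGraph, energy_boxProd_completeGraph hα hβ]

theorem energy_compl_lineGraph_completeBipartiteGraph [Nonempty α] [Nonempty β] :
    energy (completeBipartiteGraph α β).lineGraphᶜ
      = 4 * ((Fintype.card α : ℝ) - 1) * ((Fintype.card β : ℝ) - 1) := by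
  rw [← energy_congr completeGraphBoxProdIsoLineGraph.compl, energy_compl_boxProd_completeGraph]

end CompleteBipartiteLineGraph

theorem energy_lineGraph_completeBipartite_eq_energy_compl (p q : ℕ)
    (hp : 2 ≤ p) (hq : 2 ≤ q) :
    energy (completeBipartiteGraph (Fin p) (Fin q)).lineGraph
      = energy ((completeBipartiteGraph (Fin p) (Fin q)).lineGraph)ᶜ := by
  have : NeZero p := ⟨by omega⟩
  have : NeZero q := ⟨by omega⟩
  rw [energy_lineGraph_completeBipartiteGraph (by simpa using hp) (by simpa using hq),
    energy_compl_lineGraph_completeBipartiteGraph]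
end

section
/- For every integer l ≥ 4, the incidence graph IG(l, l-1, l-2) of the symmetric 2-(l, l-1, l-2) design and its complement are complementary equienergetic: E(IG(l, l-1, l-2)) = E(complement of IG(l, l-1, l-2)) = 4(l - 1), and IG(l, l-1, l-2) is not isomorphic to its complement. -/
open Polynomial

/-- The incidence graph `IG(l, l-1, l-2)` of the symmetric 2-`(l, l-1, l-2)` design:
the bipartite graph on `Fin l ⊕ Fin l` where a left vertex `i` is adjacent to a right
vertex `j` iff `i ≠ j` (the crown graph on `2l` vertices). -/
def incidenceGraphIG (l : ℕ) : SimpleGraph (Fin l ⊕ Fin l) :=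
  SimpleGraph.fromRel (fun a b => ∃ i j : Fin l, i ≠ j ∧ a = Sum.inl i ∧ b = Sum.inr j)

/-! Both adjacency matrices have the block shape `[[A, B], [B, A]]`, which is similar to
`[[A + B, 0], [B, A - B]]`, so their spectrum is that of `A + B` together with that of `A - B`.
Each of these four matrices is a rank-one matrix `u vᵀ` shifted by a scalar `-μ`, with eigenvalues
`v ⬝ u - μ` once and `-μ` with multiplicity `l - 1`. This yields the eigenvalues `±(l - 1)` and
`∓1` for the crown graph and `l, 0, l - 2, -2` for its complement, hence energy `4(l - 1)` for
both. They are not isomorphic since the crown graph is `(l - 1)`-regular on `2l` vertices, so its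
complement is `l`-regular. -/

namespace Matrix

variable {n : Type*} [Fintype n] [DecidableEq n]

theorem charpoly_fromBlocks_self {R : Type*} [CommRing R] (A B : Matrix n n R) :
    (fromBlocks A B B A).charpoly = (A + B).charpoly * (A - B).charpoly := by
  have hconj : fromBlocks (1 : Matrix n n R) 1 0 1 * fromBlocks A B B A * fromBlocks 1 (-1) 0 1 =
      fromBlocks (A + B) 0 B (A - B) := by
    simp only [fromBlocks_multiply, Matrix.one_mul, Matrix.mul_one, Matrix.mul_zero,
      Matrix.zero_mul, Matrix.mul_neg, add_zero, zero_add]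
    congr 1 <;> abel
  have hinv : (fromBlocks 1 (-1) 0 1 * fromBlocks 1 1 0 1 : Matrix (n ⊕ n) (n ⊕ n) R) = 1 := by
    simp [fromBlocks_multiply, fromBlocks_one]
  rw [← charpoly_fromBlocks_zero₁₂, ← hconj, mul_assoc, charpoly_mul_comm, mul_assoc, hinv,
    mul_one]

theorem charpoly_vecMulVec_sub_scalar {R : Type*} [CommRing R] [Nonempty n] (u v : n → R)
    (μ : R) :
    (vecMulVec u v - scalar n μ).charpoly =
      (X + C μ) ^ (Fintype.card n - 1) * (X - C (u ⬝ᵥ v - μ)) := by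
  obtain ⟨k, hk⟩ : ∃ k, Fintype.card n = k + 1 :=
    Nat.exists_eq_succ_of_ne_zero Fintype.card_ne_zero
  rw [charpoly_sub_scalar, charpoly_vecMulVec, hk]
  simp only [smul_eq_C_mul, sub_comp, mul_comp, pow_comp, X_comp, C_comp, Nat.add_sub_cancel,
    map_sub]
  ring

noncomputable def energy (A : Matrix n n ℝ) : ℝ :=
  (A.charpoly.roots.map (|·|)).sum

theorem energy_fromBlocks_self (A B : Matrix n n ℝ) :
    (fromBlocks A B B A).energy = (A + B).energy + (A - B).energy := by
  rw [energy, charpoly_fromBlocks_self,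
    roots_mul ((charpoly_monic _).mul (charpoly_monic _)).ne_zero, Multiset.map_add,
    Multiset.sum_add, energy, energy]

theorem energy_vecMulVec_sub_scalar [Nonempty n] (u v : n → ℝ) (μ : ℝ) :
    (vecMulVec u v - scalar n μ).energy =
      ((Fintype.card n : ℝ) - 1) * |μ| + |u ⬝ᵥ v - μ| := by
  have hne : (X + C μ) ^ (Fintype.card n - 1) ≠ 0 := pow_ne_zero _ (X_add_C_ne_zero μ)
  rw [energy, charpoly_vecMulVec_sub_scalar, roots_mul (mul_ne_zero hne (X_sub_C_ne_zero _)),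
    roots_pow, roots_X_add_C, roots_X_sub_C]
  simp [Multiset.map_nsmul, Multiset.sum_nsmul, Nat.cast_pred Fintype.card_pos]

end Matrix

theorem energy_eq_energy_adjMat {V : Type*} [Fintype V] [DecidableEq V] (G : SimpleGraph V) :
    energy G = (adjMat G).energy := by
  rw [energy, Subsingleton.elim (Fintype.ofFinite V) ‹_›,
    Subsingleton.elim (Classical.decEq V) ‹_›]
  rfl

theorem adjMat_eq_adjMatrix {V : Type*} [Finite V] (G : SimpleGraph V) [DecidableRel G.Adj] :
    adjMat G = G.adjMatrix ℝ := by
  rw [adjMat, Subsingleton.elim (Classical.decRel G.Adj) ‹_›]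

namespace SimpleGraph

theorem IsRegularOfDegree.isEmpty_iso_compl {V : Type*} [Fintype V] [DecidableEq V] [Nonempty V]
    {G : SimpleGraph V} [DecidableRel G.Adj] {k : ℕ} (hG : G.IsRegularOfDegree k)
    (hV : Even (Fintype.card V)) : IsEmpty (G ≃g Gᶜ) := by
  refine ⟨fun φ => ?_⟩
  obtain ⟨v⟩ := ‹Nonempty V›
  have hdeg := φ.degree_eq v
  rw [hG.compl, hG] at hdeg
  have := Fintype.card_pos (α := V)
  obtain ⟨m, hm⟩ := hV
  omega

end SimpleGraph

section incidenceGraphIG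

open Matrix SimpleGraph

variable {l : ℕ}

@[simp] theorem incidenceGraphIG_adj_inl_inr {i j : Fin l} :
    (incidenceGraphIG l).Adj (.inl i) (.inr j) ↔ i ≠ j := by
  simp [incidenceGraphIG]

@[simp] theorem incidenceGraphIG_adj_inr_inl {i j : Fin l} :
    (incidenceGraphIG l).Adj (.inr i) (.inl j) ↔ i ≠ j := by
  simp [incidenceGraphIG, eq_comm]

@[simp] theorem incidenceGraphIG_not_adj_inl_inl {i j : Fin l} :
    ¬ (incidenceGraphIG l).Adj (.inl i) (.inl j) := by
  simp [incidenceGraphIG]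

@[simp] theorem incidenceGraphIG_not_adj_inr_inr {i j : Fin l} :
    ¬ (incidenceGraphIG l).Adj (.inr i) (.inr j) := by
  simp [incidenceGraphIG]

theorem adjMat_incidenceGraphIG :
    adjMat (incidenceGraphIG l) =
      fromBlocks 0 (vecMulVec 1 1 - 1) (vecMulVec 1 1 - 1) 0 := by
  classical
  rw [adjMat_eq_adjMatrix]
  ext (i | i) (j | j) <;> by_cases h : i = j <;> simp [h, one_apply]

theorem adjMat_compl_incidenceGraphIG :
    adjMat (incidenceGraphIG l)ᶜ =
      fromBlocks (vecMulVec 1 1 - 1) 1 1 (vecMulVec 1 1 - 1) := by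
  classical
  rw [adjMat_eq_adjMatrix]
  ext (i | i) (j | j) <;> by_cases h : i = j <;> simp [h, one_apply, compl_adj]

theorem energy_incidenceGraphIG (hl : 1 ≤ l) :
    energy (incidenceGraphIG l) = 4 * ((l : ℝ) - 1) := by
  have : Nonempty (Fin l) := ⟨⟨0, hl⟩⟩
  have hsum : (0 : Matrix (Fin l) (Fin l) ℝ) + (vecMulVec 1 1 - 1) =
      vecMulVec 1 1 - scalar _ 1 := by
    simp
  have hdiff : (0 : Matrix (Fin l) (Fin l) ℝ) - (vecMulVec 1 1 - 1) =
      vecMulVec (-1) 1 - scalar _ (-1) := by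
    ext i j
    by_cases h : i = j <;> simp [one_apply, h]
  have hl' : (1 : ℝ) ≤ l := by exact_mod_cast hl
  rw [energy_eq_energy_adjMat, adjMat_incidenceGraphIG, energy_fromBlocks_self, hsum, hdiff,
    energy_vecMulVec_sub_scalar, energy_vecMulVec_sub_scalar]
  simp only [one_dotProduct_one, neg_dotProduct, Fintype.card_fin, abs_one, abs_neg]
  rw [abs_of_nonneg (by linarith), abs_of_nonpos (by linarith)]
  ring

theorem energy_compl_incidenceGraphIG (hl : 2 ≤ l) :
    energy (incidenceGraphIG l)ᶜ = 4 * ((l : ℝ) - 1) := by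
  have : Nonempty (Fin l) := ⟨⟨0, by omega⟩⟩
  have hsum : (vecMulVec 1 1 - 1 : Matrix (Fin l) (Fin l) ℝ) + 1 =
      vecMulVec 1 1 - scalar _ 0 := by
    simp
  have hdiff : (vecMulVec 1 1 - 1 : Matrix (Fin l) (Fin l) ℝ) - 1 =
      vecMulVec 1 1 - scalar _ 2 := by
    ext i j
    by_cases h : i = j <;> norm_num [one_apply, h]
  have hl' : (2 : ℝ) ≤ l := by exact_mod_cast hl
  rw [energy_eq_energy_adjMat, adjMat_compl_incidenceGraphIG, energy_fromBlocks_self, hsum, hdiff,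
    energy_vecMulVec_sub_scalar, energy_vecMulVec_sub_scalar]
  simp only [one_dotProduct_one, Fintype.card_fin, abs_zero, abs_two, sub_zero]
  rw [abs_of_nonneg (by linarith), abs_of_nonneg (by linarith)]
  ring

instance : DecidableRel (incidenceGraphIG l).Adj := fun a b =>
  inferInstanceAs (Decidable (a ≠ b ∧ _))

theorem incidenceGraphIG_isRegularOfDegree : (incidenceGraphIG l).IsRegularOfDegree (l - 1) := by
  rintro (i | i) <;> rw [← card_neighborFinset_eq_degree]
  · have : (incidenceGraphIG l).neighborFinset (.inl i) = (Finset.univ.erase i).map .inr := by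
      ext (j | j) <;> simp [eq_comm]
    simp [this]
  · have : (incidenceGraphIG l).neighborFinset (.inr i) = (Finset.univ.erase i).map .inl := by
      ext (j | j) <;> simp [eq_comm]
    simp [this]

end incidenceGraphIG

/-- For `l ≥ 4`, the incidence graph `IG(l, l-1, l-2)` and its complement are complementary
equienergetic: they have equal energy `4(l-1)` and are not isomorphic. -/
theorem incidenceGraph_compl_equienergetic (l : ℕ) (hl : 4 ≤ l) :
    energy (incidenceGraphIG l) = energy (incidenceGraphIG l)ᶜ ∧
    energy (incidenceGraphIG l) = 4 * ((l : ℝ) - 1) ∧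
    ¬ Nonempty (incidenceGraphIG l ≃g (incidenceGraphIG l)ᶜ) := by
  have hIG := energy_incidenceGraphIG (by omega : 1 ≤ l)
  refine ⟨by rw [hIG, energy_compl_incidenceGraphIG (by omega)], hIG, ?_⟩
  have : Nonempty (Fin l ⊕ Fin l) := ⟨.inl ⟨0, by omega⟩⟩
  exact not_nonempty_iff.mpr (incidenceGraphIG_isRegularOfDegree.isEmpty_iso_compl ⟨l, by simp⟩)
end
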